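/- Let k ≥ 1 be a natural number, let 1 < q < ∞, let t > 0, and let B = B(c_B, |c_B|^{−1}) be a maximal admissible ball with |c_B| ≥ 2^k. Then there is a constant c₀ = c₀(k, n, t, q) > 0, independent of c_B, such that (∫_{C_k(B)} |e^{tL} 1_B(y)|^q dγ(y))^{1/q} ≥ c₀ · |c_B|^{−n(1 + 1/q)} · exp( |c_B|² ( 2/(e^t + 1) − 1 − 1/q ) ). -/

import Mathlib

open MeasureTheory Real Set Metric
open scoped ENNReal RealInnerProductSpace

noncomputable def gaussianMeasure (n : ℕ) : Measure (EuclideanSpace ℝ (Fin n)) :=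
  volume.withDensity (fun x => ENNReal.ofReal (Real.pi ^ (-(n : ℝ) / 2) * Real.exp (-‖x‖ ^ 2)))

noncomputable def mehlerKernel (n : ℕ) (t : ℝ) (x y : EuclideanSpace ℝ (Fin n)) : ℝ :=
  (1 - Real.exp (-2 * t)) ^ (-(n : ℝ) / 2) *
    Real.exp (-(Real.exp (-t)) * ‖x - y‖ ^ 2 / (1 - Real.exp (-2 * t))) *
    Real.exp (2 * Real.exp (-t) * ⟪x, y⟫ / (1 + Real.exp (-t)))

noncomputable def ouSemigroup (n : ℕ) (t : ℝ) (u : EuclideanSpace ℝ (Fin n) → ℝ)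
    (x : EuclideanSpace ℝ (Fin n)) : ℝ :=
  ∫ y, mehlerKernel n t x y * u y ∂(gaussianMeasure n)

noncomputable def setDist {α : Type*} [PseudoMetricSpace α] (E F : Set α) : ℝ :=
  sInf {d | ∃ x ∈ E, ∃ y ∈ F, d = dist x y}

noncomputable def annulus (n : ℕ) (c : EuclideanSpace ℝ (Fin n)) (r : ℝ) (k : ℕ) :
    Set (EuclideanSpace ℝ (Fin n)) :=
  Metric.ball c (2 ^ (k + 1) * r) \ Metric.ball c (2 ^ k * r)

-- measurability of gaussian density
lemma gauss_dens_meas (n : ℕ) : Measurable (fun x : EuclideanSpace ℝ (Fin n) =>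
    ENNReal.ofReal (Real.pi ^ (-(n : ℝ) / 2) * Real.exp (-‖x‖ ^ 2))) := by
  apply Measurable.ennreal_ofReal
  fun_prop

lemma gauss_lb (n : ℕ) (s : Set (EuclideanSpace ℝ (Fin n))) (hs : MeasurableSet s) (R : ℝ)
    (hR : ∀ x ∈ s, ‖x‖ ^ 2 ≤ R) :
    ENNReal.ofReal (Real.pi ^ (-(n : ℝ) / 2) * Real.exp (-R)) * volume s ≤ gaussianMeasure n s := by
  rw [gaussianMeasure, withDensity_apply _ hs, ← setLIntegral_const]
  refine setLIntegral_mono (gauss_dens_meas n) fun x hx => ?_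
  apply ENNReal.ofReal_le_ofReal
  have h1 : Real.exp (-R) ≤ Real.exp (-‖x‖ ^ 2) := Real.exp_le_exp.2 (by linarith [hR x hx])
  have h2 : (0:ℝ) < Real.pi ^ (-(n : ℝ) / 2) := Real.rpow_pos_of_pos Real.pi_pos _
  nlinarith

lemma gauss_ub (n : ℕ) (s : Set (EuclideanSpace ℝ (Fin n))) (hs : MeasurableSet s) :
    gaussianMeasure n s ≤ ENNReal.ofReal (Real.pi ^ (-(n : ℝ) / 2)) * volume s := by
  rw [gaussianMeasure, withDensity_apply _ hs, ← setLIntegral_const]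
  refine setLIntegral_mono measurable_const fun x hx => ?_
  apply ENNReal.ofReal_le_ofReal
  have h1 : Real.exp (-‖x‖ ^ 2) ≤ 1 := Real.exp_le_one_iff.2 (neg_nonpos.2 (by positivity))
  have h2 : (0:ℝ) < Real.pi ^ (-(n : ℝ) / 2) := Real.rpow_pos_of_pos Real.pi_pos _
  nlinarith

instance (n : ℕ) : SFinite (gaussianMeasure n) := by
  unfold gaussianMeasure; infer_instance

lemma mehler_cont (n : ℕ) (t : ℝ) :
    Continuous fun p : EuclideanSpace ℝ (Fin n) × EuclideanSpace ℝ (Fin n) =>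
      mehlerKernel n t p.1 p.2 := by
  unfold mehlerKernel
  have h1 : Continuous fun p : EuclideanSpace ℝ (Fin n) × EuclideanSpace ℝ (Fin n) =>
    (⟪p.1, p.2⟫ : ℝ) := continuous_inner
  continuity

lemma mehler_pos (n : ℕ) {t : ℝ} (ht : 0 < t) (x y : EuclideanSpace ℝ (Fin n)) :
    0 < mehlerKernel n t x y := by
  unfold mehlerKernel
  have h1 : Real.exp (-2 * t) < 1 := Real.exp_lt_one_iff.2 (by linarith)
  have : (0:ℝ) < (1 - Real.exp (-2 * t)) ^ (-(n : ℝ) / 2) :=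
    Real.rpow_pos_of_pos (by linarith) _
  positivity

lemma ou_indicator (n : ℕ) (t : ℝ) (s : Set (EuclideanSpace ℝ (Fin n)))
    (hs : MeasurableSet s) (y : EuclideanSpace ℝ (Fin n)) :
    ouSemigroup n t (s.indicator 1) y = ∫ x in s, mehlerKernel n t y x ∂(gaussianMeasure n) := by
  rw [ouSemigroup, ← integral_indicator hs]
  congr 1
  ext x
  by_cases h : x ∈ s <;> simp [h]

lemma ou_meas (n : ℕ) (t : ℝ) (s : Set (EuclideanSpace ℝ (Fin n))) (hs : MeasurableSet s) :
    StronglyMeasurable fun y => ouSemigroup n t (s.indicator 1) y := by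
  have hf : StronglyMeasurable fun p : EuclideanSpace ℝ (Fin n) × EuclideanSpace ℝ (Fin n) =>
      mehlerKernel n t p.1 p.2 * s.indicator 1 p.2 := by
    exact ((mehler_cont n t).stronglyMeasurable).mul
      (((measurable_one.indicator hs).comp measurable_snd).stronglyMeasurable)
  exact hf.integral_prod_right'

lemma final_alg (a₁ D₁ D₂ c X q nr β : ℝ) (ha : 0 ≤ a₁) (hD₁ : 0 ≤ D₁) (hD₂ : 0 ≤ D₂)
    (hc : 0 < c) :
    a₁ * Real.exp (β * X) * (D₁ * Real.exp (-X) * c ^ (-nr)) *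
      (D₂ * Real.exp (-X) * c ^ (-nr)) ^ (1 / q)
    = (a₁ * D₁ * D₂ ^ (1 / q)) * c ^ (-nr * (1 + 1 / q)) * Real.exp (X * (β - 1 - 1 / q)) := by
  have e1 : X * (β - 1 - 1 / q) = β * X + -X + -X * (1 / q) := by ring
  have e2 : -nr * (1 + 1 / q) = -nr + -nr * (1 / q) := by ring
  rw [e1, e2, Real.exp_add, Real.exp_add, Real.rpow_add hc,
    Real.mul_rpow (mul_nonneg hD₂ (Real.exp_nonneg _)) (Real.rpow_nonneg hc.le _),
    Real.mul_rpow hD₂ (Real.exp_nonneg _), ← Real.exp_mul, ← Real.rpow_mul hc.le]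
  ring


set_option maxHeartbeats 1000000 in
/-- The main lower bound (Lemma 3.2 of the paper): for a maximal admissible ball
$B = B(c_B, |c_B|^{-1})$ with $|c_B| ≥ 2^k$, the $L^q$ norm of $e^{tL}\mathbf 1_B$ over
the annulus $C_k(B)$ is at least
$c_0 |c_B|^{-n(1+1/q)} \exp(|c_B|^2 (2/(e^t+1) - 1 - 1/q))$. -/
theorem lower_bound_Lq (n : ℕ) (hn : 1 ≤ n) (k : ℕ) (hk : 1 ≤ k) (q t : ℝ)
    (hq1 : 1 < q) (ht : 0 < t) :
    ∃ c₀ : ℝ, 0 < c₀ ∧ ∀ cB : EuclideanSpace ℝ (Fin n), (2 : ℝ) ^ k ≤ ‖cB‖ →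
      (∫ y in annulus n cB ‖cB‖⁻¹ k,
          |ouSemigroup n t ((Metric.ball cB ‖cB‖⁻¹).indicator 1) y| ^ q
            ∂(gaussianMeasure n)) ^ (1 / q) ≥
        c₀ * ‖cB‖ ^ (-(n : ℝ) * (1 + 1 / q)) *
          Real.exp (‖cB‖ ^ 2 * (2 / (Real.exp t + 1) - 1 - 1 / q)) := by
  classical
  haveI : NeZero n := ⟨by omega⟩
  have hq0 : (0:ℝ) < q := lt_trans one_pos hq1
  have hqne : q ≠ 0 := hq0.ne'
  have hexp2t : Real.exp (-2 * t) < 1 := Real.exp_lt_one_iff.2 (by linarith)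
  have hden : (0:ℝ) < 1 - Real.exp (-2 * t) := by linarith
  have hdenp : (0:ℝ) < 1 + Real.exp (-t) := by positivity
  set P : ℝ := Real.pi ^ (-(n : ℝ) / 2) with hPdef
  have hP : 0 < P := Real.rpow_pos_of_pos Real.pi_pos _
  set W : ℝ≥0∞ := volume (Metric.ball (0 : EuclideanSpace ℝ (Fin n)) 1) with hWdef
  have hWfin : W ≠ ∞ := measure_ball_lt_top.ne
  have hWpos : W ≠ 0 := (measure_ball_pos _ _ one_pos).ne'
  set ω : ℝ := W.toReal with hωdef
  have hω : 0 < ω := ENNReal.toReal_pos hWpos hWfin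
  have hvol : ∀ (z : EuclideanSpace ℝ (Fin n)) (ρ : ℝ), 0 ≤ ρ →
      volume (Metric.ball z ρ) = ENNReal.ofReal (ρ ^ n) * W := by
    intro z ρ hρ
    rw [Measure.addHaar_ball _ _ hρ, finrank_euclideanSpace]
    simp [hWdef]
  set a₀ : ℝ := (1 - Real.exp (-2 * t)) ^ (-(n : ℝ) / 2) with ha₀def
  have ha₀ : 0 < a₀ := Real.rpow_pos_of_pos hden _
  set β : ℝ := 2 / (Real.exp t + 1) with hβdef
  have hβ : 0 < β := by positivity
  have hβeq : ∀ I : ℝ, 2 * Real.exp (-t) * I / (1 + Real.exp (-t)) = β * I := by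
    intro I
    rw [hβdef, Real.exp_neg]
    have h := (Real.exp_pos t).ne'
    field_simp
  set K₁ : ℝ := 2 ^ (k + 1) + 2 with hK₁def
  set K₂ : ℝ := 2 ^ (k + 2) + 4 with hK₂def
  set a₁ : ℝ := a₀ * Real.exp (-(9 * Real.exp (-t)) / (1 - Real.exp (-2 * t))) *
    Real.exp (-(β * K₁)) with ha₁def
  have ha₁ : 0 < a₁ := by positivity
  set D₁ : ℝ := P * Real.exp (-3) * ω with hD₁def
  have hD₁ : 0 < D₁ := by positivity
  set D₂ : ℝ := P * Real.exp (-K₂) * ((2:ℝ) ^ k / 2) ^ n * ω with hD₂def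
  have hD₂ : 0 < D₂ := by positivity
  refine ⟨a₁ * D₁ * D₂ ^ (1 / q), by positivity, ?_⟩
  intro cB hcB
  set c : ℝ := ‖cB‖ with hcdef
  have h2le : (2:ℝ) ≤ 2 ^ k := by
    calc (2:ℝ) = 2 ^ 1 := (pow_one 2).symm
    _ ≤ 2 ^ k := pow_le_pow_right₀ one_le_two hk
  have hc2 : (2:ℝ) ≤ c := le_trans h2le hcB
  have hc0 : (0:ℝ) < c := by linarith
  set r : ℝ := c⁻¹ with hrdef
  have hr0 : (0:ℝ) < r := inv_pos.2 hc0
  have hcr : c * r = 1 := mul_inv_cancel₀ hc0.ne'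
  have hrhalf : r ≤ 1 / 2 := by
    rw [hrdef, inv_le_comm₀ hc0 (by norm_num)]
    linarith
  have h2kr : (2:ℝ) ^ k * r ≤ 1 := by
    have := mul_le_mul_of_nonneg_right hcB hr0.le
    rw [hcr] at this; linarith [this]
  have h2k1r : (2:ℝ) ^ (k + 1) * r ≤ 2 := by
    rw [pow_succ]; nlinarith
  set γ := gaussianMeasure n with hγdef
  set B := Metric.ball cB r with hBdef
  set Ann := annulus n cB r k with hAnndef
  have hBmeas : MeasurableSet B := measurableSet_ball
  have hAnnMeas : MeasurableSet Ann := by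
    rw [hAnndef, annulus]
    exact measurableSet_ball.diff measurableSet_ball
  -- finiteness
  have hγfin : ∀ s : Set (EuclideanSpace ℝ (Fin n)), MeasurableSet s → Bornology.IsBounded s →
      γ s ≠ ∞ := by
    intro s hs hsb
    refine ne_of_lt (lt_of_le_of_lt (gauss_ub n s hs) ?_)
    have hvs : volume s < ∞ := hsb.measure_lt_top
    exact ENNReal.mul_lt_top ENNReal.ofReal_lt_top hvs
  have hγB_fin : γ B ≠ ∞ := hγfin B hBmeas isBounded_ball
  have hγAnn_fin : γ Ann ≠ ∞ := by
    refine hγfin Ann hAnnMeas ?_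
    rw [hAnndef, annulus]
    exact isBounded_ball.subset diff_subset
  -- membership facts
  have hxB : ∀ x ∈ B, ‖x - cB‖ ≤ r := by
    intro x hx
    rw [hBdef, mem_ball, dist_eq_norm] at hx
    exact hx.le
  have hxBnorm : ∀ x ∈ B, ‖x‖ ≤ c + 1 := by
    intro x hx
    have h1 := hxB x hx
    have h2 : ‖x‖ - ‖cB‖ ≤ ‖x - cB‖ := norm_sub_norm_le x cB
    have : r ≤ 1 := by linarith
    rw [← hcdef] at h2
    linarith
  have hxBsq : ∀ x ∈ B, ‖x‖ ^ 2 ≤ c ^ 2 + 3 := by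
    intro x hx
    have h1 := hxB x hx
    have h2 : ‖x‖ - ‖cB‖ ≤ ‖x - cB‖ := norm_sub_norm_le x cB
    rw [← hcdef] at h2
    have h3 : 0 ≤ ‖x‖ := norm_nonneg _
    nlinarith
  have hyAnn : ∀ y ∈ Ann, ‖y - cB‖ ≤ 2 ^ (k + 1) * r := by
    intro y hy
    rw [hAnndef, annulus, Set.mem_diff, mem_ball, dist_eq_norm] at hy
    exact hy.1.le
  have hyAnnnorm : ∀ y ∈ Ann, ‖y‖ ≤ c + 2 := by
    intro y hy
    have h1 := hyAnn y hy
    have h2 : ‖y‖ - ‖cB‖ ≤ ‖y - cB‖ := norm_sub_norm_le y cB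
    rw [← hcdef] at h2
    linarith
  have hyAnnsq : ∀ y ∈ Ann, ‖y‖ ^ 2 ≤ c ^ 2 + K₂ := by
    intro y hy
    have h1 := hyAnn y hy
    have h2 : ‖y‖ - ‖cB‖ ≤ ‖y - cB‖ := norm_sub_norm_le y cB
    rw [← hcdef] at h2
    have h3 : 0 ≤ ‖y‖ := norm_nonneg _
    have h4 : c * (2 ^ (k + 1) * r) = 2 ^ (k + 1) := by
      calc c * (2 ^ (k + 1) * r) = 2 ^ (k + 1) * (c * r) := by ring
      _ = 2 ^ (k + 1) := by rw [hcr, mul_one]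
    have h5 : K₂ = 2 * 2 ^ (k + 1) + 4 := by rw [hK₂def, pow_succ]; ring
    have hs0 : (0:ℝ) ≤ 2 ^ (k + 1) * r := by positivity
    have hys : ‖y‖ ≤ c + 2 ^ (k + 1) * r := by linarith
    nlinarith [mul_le_mul hys hys h3 (by linarith : (0:ℝ) ≤ c + 2 ^ (k + 1) * r),
      mul_le_mul h2k1r h2k1r hs0 (by norm_num : (0:ℝ) ≤ 2), h4, h5]
  -- inner product lower bound
  have hinner : ∀ y ∈ Ann, ∀ x ∈ B, c ^ 2 - K₁ ≤ ⟪y, x⟫ := by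
    intro y hy x hx
    have hexp : (⟪y, x⟫ : ℝ) = ⟪cB, cB⟫ + ⟪cB, x - cB⟫ + ⟪y - cB, cB⟫ + ⟪y - cB, x - cB⟫ := by
      simp only [inner_sub_left, inner_sub_right]; ring
    have hcc : (⟪cB, cB⟫ : ℝ) = c ^ 2 := by rw [real_inner_self_eq_norm_sq, hcdef]
    have hb1 : |(⟪cB, x - cB⟫ : ℝ)| ≤ ‖cB‖ * ‖x - cB‖ := abs_real_inner_le_norm _ _
    have hb2 : |(⟪y - cB, cB⟫ : ℝ)| ≤ ‖y - cB‖ * ‖cB‖ := abs_real_inner_le_norm _ _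
    have hb3 : |(⟪y - cB, x - cB⟫ : ℝ)| ≤ ‖y - cB‖ * ‖x - cB‖ := abs_real_inner_le_norm _ _
    have hx1 := hxB x hx
    have hy1 := hyAnn y hy
    have hnx : (0:ℝ) ≤ ‖x - cB‖ := norm_nonneg _
    have hny : (0:ℝ) ≤ ‖y - cB‖ := norm_nonneg _
    have e1 : ‖cB‖ * ‖x - cB‖ ≤ 1 := by
      rw [← hcdef]
      calc c * ‖x - cB‖ ≤ c * r := by gcongr
      _ = 1 := hcr
    have e2 : ‖y - cB‖ * ‖cB‖ ≤ 2 ^ (k + 1) := by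
      rw [← hcdef]
      calc ‖y - cB‖ * c ≤ (2 ^ (k + 1) * r) * c := by gcongr
      _ = 2 ^ (k + 1) * (c * r) := by ring
      _ = 2 ^ (k + 1) := by rw [hcr, mul_one]
    have e3 : ‖y - cB‖ * ‖x - cB‖ ≤ 1 := by
      calc ‖y - cB‖ * ‖x - cB‖ ≤ (2 ^ (k + 1) * r) * r := by gcongr
      _ ≤ 2 * (1/2) := by
        refine mul_le_mul h2k1r hrhalf hr0.le (by norm_num)
      _ = 1 := by norm_num
    have hK₁' : K₁ = 2 ^ (k + 1) + 2 := hK₁def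
    have a1 := neg_abs_le (⟪cB, x - cB⟫ : ℝ)
    have a2 := neg_abs_le (⟪y - cB, cB⟫ : ℝ)
    have a3 := neg_abs_le (⟪y - cB, x - cB⟫ : ℝ)
    rw [hexp, hcc, hK₁']
    linarith
  -- distance bound
  have hdist : ∀ y ∈ Ann, ∀ x ∈ B, ‖y - x‖ ^ 2 ≤ 9 := by
    intro y hy x hx
    have h1 : ‖y - x‖ ≤ ‖y - cB‖ + ‖cB - x‖ := by
      calc ‖y - x‖ = ‖(y - cB) + (cB - x)‖ := by abel_nf
      _ ≤ ‖y - cB‖ + ‖cB - x‖ := norm_add_le _ _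
    have h2 : ‖cB - x‖ = ‖x - cB‖ := norm_sub_rev _ _
    have h3 := hxB x hx
    have h4 := hyAnn y hy
    have h5 : (0:ℝ) ≤ ‖y - x‖ := norm_nonneg _
    nlinarith
  -- kernel lower bound
  have hker : ∀ y ∈ Ann, ∀ x ∈ B, a₁ * Real.exp (β * c ^ 2) ≤ mehlerKernel n t y x := by
    intro y hy x hx
    rw [mehlerKernel, ← ha₀def]
    have hnum : -(9 * Real.exp (-t)) ≤ -(Real.exp (-t)) * ‖y - x‖ ^ 2 := by
      nlinarith [Real.exp_pos (-t), hdist y hy x hx]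
    have harg1 : -(9 * Real.exp (-t)) / (1 - Real.exp (-2 * t)) ≤
        -(Real.exp (-t)) * ‖y - x‖ ^ 2 / (1 - Real.exp (-2 * t)) := by
      rw [div_eq_mul_inv, div_eq_mul_inv]
      exact mul_le_mul_of_nonneg_right hnum (inv_nonneg.2 hden.le)
    have harg2 : β * (c ^ 2 - K₁) ≤ 2 * Real.exp (-t) * ⟪y, x⟫ / (1 + Real.exp (-t)) := by
      rw [hβeq]
      exact mul_le_mul_of_nonneg_left (hinner y hy x hx) hβ.le
    calc a₁ * Real.exp (β * c ^ 2)
        = a₀ * Real.exp (-(9 * Real.exp (-t)) / (1 - Real.exp (-2 * t))) *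
          Real.exp (β * (c ^ 2 - K₁)) := by
          rw [ha₁def, show β * (c ^ 2 - K₁) = β * c ^ 2 + -(β * K₁) by ring, Real.exp_add]
          ring
      _ ≤ a₀ * Real.exp (-(Real.exp (-t)) * ‖y - x‖ ^ 2 / (1 - Real.exp (-2 * t))) *
          Real.exp (2 * Real.exp (-t) * ⟪y, x⟫ / (1 + Real.exp (-t))) := by
          gcongr <;> first | exact ha₀.le | exact harg1 | exact harg2
  -- kernel upper bound (crude, for integrability)
  set CM : ℝ := a₀ * Real.exp (2 * Real.exp (-t) * ((c + 2) * (c + 1)) / (1 + Real.exp (-t)))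
    with hCMdef
  have hCM : 0 < CM := by positivity
  have hMub : ∀ y : EuclideanSpace ℝ (Fin n), ‖y‖ ≤ c + 2 → ∀ x ∈ B,
      ‖mehlerKernel n t y x‖ ≤ CM := by
    intro y hy x hx
    rw [Real.norm_eq_abs, abs_of_pos (mehler_pos n ht y x), mehlerKernel, ← ha₀def]
    have h1 : Real.exp (-(Real.exp (-t)) * ‖y - x‖ ^ 2 / (1 - Real.exp (-2 * t))) ≤ 1 := by
      apply Real.exp_le_one_iff.2
      apply div_nonpos_of_nonpos_of_nonneg ?_ hden.le
      nlinarith [Real.exp_pos (-t), sq_nonneg ‖y - x‖]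
    have h2 : 2 * Real.exp (-t) * ⟪y, x⟫ / (1 + Real.exp (-t)) ≤
        2 * Real.exp (-t) * ((c + 2) * (c + 1)) / (1 + Real.exp (-t)) := by
      rw [div_eq_mul_inv, div_eq_mul_inv]
      apply mul_le_mul_of_nonneg_right ?_ (inv_nonneg.2 hdenp.le)
      apply mul_le_mul_of_nonneg_left ?_ (by positivity)
      calc (⟪y, x⟫:ℝ) ≤ ‖y‖ * ‖x‖ := real_inner_le_norm y x
      _ ≤ (c + 2) * (c + 1) := by
          apply mul_le_mul hy (hxBnorm x hx) (norm_nonneg _) (by linarith)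
    calc a₀ * Real.exp (-(Real.exp (-t)) * ‖y - x‖ ^ 2 / (1 - Real.exp (-2 * t))) *
        Real.exp (2 * Real.exp (-t) * ⟪y, x⟫ / (1 + Real.exp (-t)))
        ≤ a₀ * 1 * Real.exp (2 * Real.exp (-t) * ((c + 2) * (c + 1)) / (1 + Real.exp (-t))) := by
          gcongr <;> first | exact ha₀.le | exact h1 | exact h2
      _ = CM := by rw [hCMdef]; ring
  -- integrability of kernel on B
  have hInt : ∀ y : EuclideanSpace ℝ (Fin n), ‖y‖ ≤ c + 2 →
      IntegrableOn (fun x => mehlerKernel n t y x) B γ := by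
    intro y hy
    apply Measure.integrableOn_of_bounded hγB_fin
    · exact ((mehler_cont n t).comp (Continuous.prodMk_right y)).aestronglyMeasurable
    · exact (ae_restrict_mem hBmeas).mono fun x hx => hMub y hy x hx
  -- gaussian measure lower bounds
  have hγB_lb : D₁ * Real.exp (-(c ^ 2)) * r ^ n ≤ (γ B).toReal := by
    have h1 : ENNReal.ofReal (P * Real.exp (-(c ^ 2 + 3))) * volume B ≤ γ B :=
      gauss_lb n B hBmeas (c ^ 2 + 3) hxBsq
    have h2 : volume B = ENNReal.ofReal (r ^ n) * W := hvol cB r hr0.le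
    have h3 := ENNReal.toReal_mono hγB_fin h1
    rw [h2, ← mul_assoc, ENNReal.toReal_mul, ENNReal.toReal_mul, ENNReal.toReal_ofReal
      (by positivity), ENNReal.toReal_ofReal (by positivity), ← hωdef] at h3
    refine le_trans (le_of_eq ?_) h3
    rw [hD₁def, show -(c ^ 2 + 3) = -3 + -(c ^ 2) by ring, Real.exp_add]
    ring
  -- annulus contains a small ball
  have hcBne : cB ≠ 0 := by
    intro h
    rw [hcdef, h] at hc0
    simp at hc0
  set u : EuclideanSpace ℝ (Fin n) := ‖cB‖⁻¹ • cB with hudef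
  have hu : ‖u‖ = 1 := by
    rw [hudef, norm_smul, norm_inv, norm_norm, inv_mul_cancel₀ (by rw [← hcdef]; exact hc0.ne')]
  set δ : ℝ := 2 ^ k * r with hδdef
  have hδ0 : 0 < δ := by positivity
  set z : EuclideanSpace ℝ (Fin n) := cB + (3 * δ / 2) • u with hzdef
  have hzc : ‖z - cB‖ = 3 * δ / 2 := by
    rw [hzdef, add_sub_cancel_left, norm_smul, hu, mul_one, Real.norm_eq_abs,
      abs_of_pos (by positivity)]
  have hsub : Metric.ball z (δ / 2) ⊆ Ann := by
    intro y hy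
    rw [mem_ball, dist_eq_norm] at hy
    have hyz : ‖y - z‖ < δ / 2 := hy
    have htri1 : ‖y - cB‖ ≤ ‖y - z‖ + ‖z - cB‖ := by
      calc ‖y - cB‖ = ‖(y - z) + (z - cB)‖ := by abel_nf
      _ ≤ ‖y - z‖ + ‖z - cB‖ := norm_add_le _ _
    have htri2 : ‖z - cB‖ ≤ ‖y - z‖ + ‖y - cB‖ := by
      calc ‖z - cB‖ = ‖(y - cB) - (y - z)‖ := by abel_nf
      _ ≤ ‖y - cB‖ + ‖y - z‖ := norm_sub_le _ _
      _ = ‖y - z‖ + ‖y - cB‖ := by ring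
    rw [hAnndef, annulus, Set.mem_diff]
    constructor
    · rw [mem_ball, dist_eq_norm]
      have : (2:ℝ) ^ (k + 1) * r = 2 * δ := by rw [hδdef, pow_succ]; ring
      rw [this]
      calc ‖y - cB‖ ≤ ‖y - z‖ + ‖z - cB‖ := htri1
      _ < δ / 2 + 3 * δ / 2 := by rw [hzc]; linarith
      _ = 2 * δ := by ring
    · rw [mem_ball, dist_eq_norm, ← hδdef]
      push_neg
      rw [hzc] at htri2
      linarith
  have hγAnn_lb : D₂ * Real.exp (-(c ^ 2)) * r ^ n ≤ (γ Ann).toReal := by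
    have h1 : ENNReal.ofReal (P * Real.exp (-(c ^ 2 + K₂))) * volume Ann ≤ γ Ann :=
      gauss_lb n Ann hAnnMeas (c ^ 2 + K₂) hyAnnsq
    have h2 : ENNReal.ofReal ((δ / 2) ^ n) * W ≤ volume Ann := by
      rw [← hvol z (δ / 2) (by positivity)]
      exact measure_mono hsub
    have h3 : ENNReal.ofReal (P * Real.exp (-(c ^ 2 + K₂))) *
        (ENNReal.ofReal ((δ / 2) ^ n) * W) ≤ γ Ann := by
      refine le_trans ?_ h1
      exact mul_le_mul_right h2 _
    have h4 := ENNReal.toReal_mono hγAnn_fin h3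
    rw [ENNReal.toReal_mul, ENNReal.toReal_mul, ENNReal.toReal_ofReal (by positivity),
      ENNReal.toReal_ofReal (by positivity), ← hωdef] at h4
    refine le_trans (le_of_eq ?_) h4
    rw [hD₂def, show -(c ^ 2 + K₂) = -K₂ + -(c ^ 2) by ring, Real.exp_add,
      show (δ / 2) ^ n = ((2:ℝ) ^ k / 2) ^ n * r ^ n by
        rw [← mul_pow, hδdef]; ring_nf]
    ring
  -- lower bound for the semigroup on the annulus
  set m : ℝ := a₁ * Real.exp (β * c ^ 2) with hmdef
  have hm : 0 < m := by positivity
  set G₀ : ℝ := D₁ * Real.exp (-(c ^ 2)) * r ^ n with hG₀def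
  have hG₀ : 0 < G₀ := by positivity
  set A₀ : ℝ := D₂ * Real.exp (-(c ^ 2)) * r ^ n with hA₀def
  have hA₀ : 0 < A₀ := by positivity
  have hE_lb : ∀ y ∈ Ann, m * G₀ ≤ ouSemigroup n t (B.indicator 1) y := by
    intro y hy
    rw [ou_indicator n t B hBmeas y, ← hγdef]
    calc m * G₀ ≤ m * (γ B).toReal := mul_le_mul_of_nonneg_left hγB_lb hm.le
    _ ≤ ∫ x in B, mehlerKernel n t y x ∂γ :=
        setIntegral_ge_of_const_le_real hBmeas hγB_fin (fun x hx => hker y hy x hx)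
          (hInt y (hyAnnnorm y hy))
  have hE_ub : ∀ y ∈ Ann, |ouSemigroup n t (B.indicator 1) y| ≤ CM * (γ B).toReal := by
    intro y hy
    rw [ou_indicator n t B hBmeas y, ← hγdef, ← Real.norm_eq_abs]
    exact norm_setIntegral_le_of_norm_le_const hγB_fin.lt_top
      (fun x hx => hMub y (hyAnnnorm y hy) x hx)
  -- integrability of the q-th power on the annulus
  set F : EuclideanSpace ℝ (Fin n) → ℝ := fun y => |ouSemigroup n t (B.indicator 1) y| ^ q
    with hFdef
  have hFmeas : AEStronglyMeasurable F γ := by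
    apply Measurable.aestronglyMeasurable
    exact ((Real.continuous_rpow_const hq0.le).comp continuous_abs).measurable.comp
      (ou_meas n t B hBmeas).measurable
  have hFint : IntegrableOn F Ann γ := by
    apply Measure.integrableOn_of_bounded hγAnn_fin hFmeas
      (M := (CM * (γ B).toReal) ^ q)
    refine (ae_restrict_mem hAnnMeas).mono fun y hy => ?_
    rw [Real.norm_eq_abs, hFdef, abs_of_nonneg (Real.rpow_nonneg (abs_nonneg _) q)]
    exact Real.rpow_le_rpow (abs_nonneg _) (hE_ub y hy) hq0.le
  have key : (m * G₀) ^ q * (γ Ann).toReal ≤ ∫ y in Ann, F y ∂γ := by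
    apply setIntegral_ge_of_const_le_real hAnnMeas hγAnn_fin ?_ hFint
    intro y hy
    show (m * G₀) ^ q ≤ |ouSemigroup n t (B.indicator 1) y| ^ q
    apply Real.rpow_le_rpow (by positivity) ?_ hq0.le
    exact le_trans (hE_lb y hy) (le_abs_self _)
  -- conclusion
  have hAnnInt_lb : (m * G₀) ^ q * A₀ ≤ ∫ y in Ann, F y ∂γ := by
    refine le_trans ?_ key
    exact mul_le_mul_of_nonneg_left hγAnn_lb (by positivity)
  have hrn : r ^ n = c ^ (-(n:ℝ)) := by
    rw [hrdef, inv_pow, ← Real.rpow_natCast c n, ← Real.rpow_neg hc0.le]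
  rw [ge_iff_le]
  have hfinal : a₁ * D₁ * D₂ ^ (1 / q) * c ^ (-(n:ℝ) * (1 + 1 / q)) *
      Real.exp (c ^ 2 * (β - 1 - 1 / q)) = (m * G₀) * A₀ ^ (1 / q) := by
    rw [hmdef, hG₀def, hA₀def, hrn]
    rw [← final_alg a₁ D₁ D₂ c (c ^ 2) q (n:ℝ) β ha₁.le hD₁.le hD₂.le hc0]
  calc a₁ * D₁ * D₂ ^ (1 / q) * c ^ (-(n:ℝ) * (1 + 1 / q)) *
      Real.exp (c ^ 2 * (β - 1 - 1 / q))
      = (m * G₀) * A₀ ^ (1 / q) := hfinal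
    _ = ((m * G₀) ^ q * A₀) ^ (1 / q) := by
        rw [Real.mul_rpow (Real.rpow_nonneg (mul_nonneg hm.le hG₀.le) q) hA₀.le,
          ← Real.rpow_mul (mul_nonneg hm.le hG₀.le), mul_one_div_cancel hqne, Real.rpow_one]
    _ ≤ (∫ y in Ann, F y ∂γ) ^ (1 / q) :=
        Real.rpow_le_rpow (by positivity) hAnnInt_lb (by positivity)
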